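/- Let (E, Λ, p) and (F, Λ, q) be locally Hilbert space models over the same directed index set Λ and let V ∈ 𝓛(E, F). Then V is bijective if and only if for every λ ∈ Λ the restriction V_λ : p λ → q λ is bijective. Moreover, if V is bijective, then the inverse map V⁻¹ : F → E belongs to 𝓛(F, E), and for each λ the restriction of V⁻¹ to q λ is the inverse of V_λ. -/

import Mathlib

open scoped InnerProductSpace

/-- The orthogonal projection of an inner product space onto a complete submodule,
viewed as a continuous linear map of the ambient space into itself. -/
noncomputable def projL {E : Type*} [NormedAddCommGroup E] [InnerProductSpace ℂ E]
    (K : Submodule ℂ E) [CompleteSpace K] : E →L[ℂ] E :=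
  K.subtypeL.comp (K.orthogonalProjectionOnto)

/-- An element of `𝓛(E, F)` for two locally Hilbert space models `(E, Λ, p)` and `(F, Λ, q)`
over the same index set: a linear map `E → F` mapping each `p l` into `q l`, whose
restrictions `p l → q l` are continuous (bounded) operators, and which intertwines the
orthogonal projections `projL (p l)` and `projL (q l)`. -/
structure LocOpPair {E F : Type*} [NormedAddCommGroup E] [InnerProductSpace ℂ E]
    [NormedAddCommGroup F] [InnerProductSpace ℂ F]
    {Λ : Type*} (p : Λ → Submodule ℂ E) (q : Λ → Submodule ℂ F)
    [∀ l, CompleteSpace (p l)] [∀ l, CompleteSpace (q l)] where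
  toFun : E →ₗ[ℂ] F
  restr : ∀ l, p l →L[ℂ] q l
  restr_eq : ∀ l (x : p l), (restr l x : F) = toFun x
  proj_comm : ∀ l (x : E), toFun (projL (p l) x) = projL (q l) (toFun x)

/-! A vector in the kernel of `V` lies in some `p λ`, on which `V` is injective. Surjectivity of the
restrictions uses `V P_λ = Q_λ V`: a preimage of `y ∈ q λ` is moved into `p λ` by `P_λ`.
For bijective `V` the restrictions are bijections between Hilbert spaces, so their inverses are
bounded by the open mapping theorem; these inverses and the inverse of `V` form an element
of `𝓛(F, E)`. -/

open Function

section Projection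

variable {E : Type*} [NormedAddCommGroup E] [InnerProductSpace ℂ E]
  (K : Submodule ℂ E) [CompleteSpace K]

lemma projL_mem (x : E) : projL K x ∈ K :=
  (K.orthogonalProjectionOnto x).2

lemma projL_eq_self {x : E} (hx : x ∈ K) : projL K x = x := by
  simp [projL, Submodule.orthogonalProjectionOnto_mem_subspace_eq_self (K := K) ⟨x, hx⟩]

end Projection

namespace LocOpPair

variable {E F : Type*} [NormedAddCommGroup E] [InnerProductSpace ℂ E]
  [NormedAddCommGroup F] [InnerProductSpace ℂ F]
  {Λ : Type*} {p : Λ → Submodule ℂ E} {q : Λ → Submodule ℂ F}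
  [∀ l, CompleteSpace (p l)] [∀ l, CompleteSpace (q l)] (V : LocOpPair p q)

lemma restr_injective (hV : Injective V.toFun) (l : Λ) : Injective (V.restr l) :=
  fun a b hab => Subtype.ext <| hV <| by rw [← V.restr_eq l a, ← V.restr_eq l b, hab]

lemma restr_surjective (hV : Surjective V.toFun) (l : Λ) : Surjective (V.restr l) := by
  intro y
  obtain ⟨x, hx⟩ := hV y
  refine ⟨⟨projL (p l) x, projL_mem _ x⟩, Subtype.ext ?_⟩
  rw [V.restr_eq, V.proj_comm, hx, projL_eq_self _ y.2]

lemma injective_of_forall_restr_injective (hexh : ∀ x : E, ∃ l, x ∈ p l)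
    (h : ∀ l, Injective (V.restr l)) : Injective V.toFun := by
  refine (injective_iff_map_eq_zero V.toFun).2 fun x hx => ?_
  obtain ⟨l, hl⟩ := hexh x
  have hrestr : V.restr l ⟨x, hl⟩ = 0 := Subtype.ext <| by rw [V.restr_eq, hx]; rfl
  simpa using (injective_iff_map_eq_zero (V.restr l)).1 (h l) _ hrestr

lemma surjective_of_forall_restr_surjective (hexh : ∀ y : F, ∃ l, y ∈ q l)
    (h : ∀ l, Surjective (V.restr l)) : Surjective V.toFun := by
  intro y
  obtain ⟨l, hl⟩ := hexh y
  obtain ⟨x, hx⟩ := h l ⟨y, hl⟩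
  exact ⟨x, by rw [← V.restr_eq, hx]⟩

lemma bijective_iff_forall_restr_bijective (hexhp : ∀ x : E, ∃ l, x ∈ p l)
    (hexhq : ∀ y : F, ∃ l, y ∈ q l) : Bijective V.toFun ↔ ∀ l, Bijective (V.restr l) :=
  ⟨fun hV l => ⟨V.restr_injective hV.1 l, V.restr_surjective hV.2 l⟩,
    fun h => ⟨V.injective_of_forall_restr_injective hexhp fun l => (h l).1,
      V.surjective_of_forall_restr_surjective hexhq fun l => (h l).2⟩⟩

noncomputable def restrEquiv (hV : Bijective V.toFun) (l : Λ) : p l ≃L[ℂ] q l :=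
  ContinuousLinearEquiv.ofBijective (V.restr l)
    (LinearMap.ker_eq_bot.2 (V.restr_injective hV.1 l))
    (LinearMap.range_eq_top.2 (V.restr_surjective hV.2 l))

lemma restrEquiv_apply (hV : Bijective V.toFun) (l : Λ) (x : p l) :
    V.restrEquiv hV l x = V.restr l x :=
  rfl

lemma toFun_ofBijective_symm (hV : Bijective V.toFun) (y : F) :
    V.toFun ((LinearEquiv.ofBijective V.toFun hV).symm y) = y :=
  (LinearEquiv.ofBijective V.toFun hV).apply_symm_apply y

noncomputable def symm (hV : Bijective V.toFun) : LocOpPair q p where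
  toFun := (LinearEquiv.ofBijective V.toFun hV).symm.toLinearMap
  restr l := (V.restrEquiv hV l).symm
  restr_eq l y := hV.injective <| by
    rw [← V.restr_eq, ← restrEquiv_apply _ hV, ContinuousLinearEquiv.coe_coe,
      ContinuousLinearEquiv.apply_symm_apply]
    exact (V.toFun_ofBijective_symm hV y).symm
  proj_comm l y := hV.injective <| by
    simp only [LinearEquiv.coe_coe, toFun_ofBijective_symm, V.proj_comm]

lemma symm_toFun_toFun (hV : Bijective V.toFun) (x : E) :
    (V.symm hV).toFun (V.toFun x) = x :=
  (LinearEquiv.ofBijective V.toFun hV).symm_apply_apply x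

lemma toFun_symm_toFun (hV : Bijective V.toFun) (y : F) :
    V.toFun ((V.symm hV).toFun y) = y :=
  V.toFun_ofBijective_symm hV y

lemma symm_restr_restr (hV : Bijective V.toFun) (l : Λ) (x : p l) :
    (V.symm hV).restr l (V.restr l x) = x :=
  (V.restrEquiv hV l).symm_apply_apply x

lemma restr_symm_restr (hV : Bijective V.toFun) (l : Λ) (y : q l) :
    V.restr l ((V.symm hV).restr l y) = y :=
  (V.restrEquiv hV l).apply_symm_apply y

end LocOpPair

theorem locOpPair_bijective_iff_general
    {E F : Type*} [NormedAddCommGroup E] [InnerProductSpace ℂ E]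
    [NormedAddCommGroup F] [InnerProductSpace ℂ F]
    {Λ : Type*}
    (p : Λ → Submodule ℂ E) (q : Λ → Submodule ℂ F)
    [∀ l, CompleteSpace (p l)] [∀ l, CompleteSpace (q l)]
    (hexhp : ∀ x : E, ∃ l, x ∈ p l)
    (hexhq : ∀ y : F, ∃ l, y ∈ q l)
    (V : LocOpPair p q) :
    (Function.Bijective V.toFun ↔ ∀ l, Function.Bijective (V.restr l)) ∧
    (Function.Bijective V.toFun →
      ∃ W : LocOpPair q p,
        (∀ x : E, W.toFun (V.toFun x) = x) ∧
        (∀ y : F, V.toFun (W.toFun y) = y) ∧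
        (∀ l, (∀ x : p l, W.restr l (V.restr l x) = x) ∧
              (∀ y : q l, V.restr l (W.restr l y) = y))) :=
  ⟨V.bijective_iff_forall_restr_bijective hexhp hexhq, fun hV =>
    ⟨V.symm hV, V.symm_toFun_toFun hV, V.toFun_symm_toFun hV,
      fun l => ⟨V.symm_restr_restr hV l, V.restr_symm_restr hV l⟩⟩⟩

/-- **Theorem 2.2 (iii).**  `V ∈ 𝓛(E, F)` is bijective iff each restriction
`V_λ : p λ → q λ` is bijective; in that case the inverse map belongs to `𝓛(F, E)` and its
restrictions are the inverses of the `V_λ`. -/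
theorem locOpPair_bijective_iff
    {E F : Type*} [NormedAddCommGroup E] [InnerProductSpace ℂ E]
    [NormedAddCommGroup F] [InnerProductSpace ℂ F]
    {Λ : Type*} [PartialOrder Λ] [IsDirected Λ (· ≤ ·)]
    (p : Λ → Submodule ℂ E) (q : Λ → Submodule ℂ F)
    [∀ l, CompleteSpace (p l)] [∀ l, CompleteSpace (q l)]
    (hmonop : Monotone p) (hexhp : ∀ x : E, ∃ l, x ∈ p l)
    (hmonoq : Monotone q) (hexhq : ∀ y : F, ∃ l, y ∈ q l)
    (V : LocOpPair p q) :
    (Function.Bijective V.toFun ↔ ∀ l, Function.Bijective (V.restr l)) ∧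
    (Function.Bijective V.toFun →
      ∃ W : LocOpPair q p,
        (∀ x : E, W.toFun (V.toFun x) = x) ∧
        (∀ y : F, V.toFun (W.toFun y) = y) ∧
        (∀ l, (∀ x : p l, W.restr l (V.restr l x) = x) ∧
              (∀ y : q l, V.restr l (W.restr l y) = y))) :=
  locOpPair_bijective_iff_general p q hexhp hexhq V
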